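/- Let $P(x) = \sum_{|\beta| \le d} a_\beta x^\beta$ be a polynomial on $\mathbb{R}^n$ of degree at most $d$, and let $0 < \varepsilon < 1/d$. Then there exists a constant $A_\varepsilon$ depending only on $\varepsilon$, $d$ and $n$ (not on the coefficients) such that $\int_{|x| \le 1} |P(x)|^{-\varepsilon}\, dx \le A_\varepsilon \big(\sum_{|\beta| \le d} |a_\beta|\big)^{-\varepsilon}$. -/

import Mathlib

/-!
In one variable: a sublevel set `{t ∈ [-1, 1] | |p t| ≤ η}` of measure `m` contains `d + 1`
points at mutual distance `≥ m / (d + 2)`, and Lagrange interpolation at them bounds every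
coefficient `a_k` of `p` by `(d + 1) η (2 (d + 2) / m)^d`; hence the sublevel set has measure
`≲ (η / |a_k|)^θ` for every `θ ≤ 1 / d`.

In `n + 1` variables, write `P(t, y) = ∑ₖ cₖ(y) tᵏ` and, for a coefficient `a_β` of `P`, take
`c = c_{β₀}`, which has `a_β` among its coefficients. By Fubini and the one-variable bound,
`|{|P| ≤ η}| ≲ η^θ ∫ |c(y)|^(-θ) dy`, and the sublevel estimate for `c` in `n` variables, at an
exponent slightly larger than `θ`, makes this integral finite by a dyadic decomposition of the
values of `|c|`. The same decomposition turns the sublevel estimate for `P` into the bound on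
`∫ |P|^(-ε)` in terms of `max |a_β|`, and `∑ |a_β| ≤ (d + 1)^n max |a_β|`.
-/

open MeasureTheory Set Metric

theorem exists_gt_mul_lt_one {a θ : ℝ} (h : a * θ < 1) : ∃ θ', θ < θ' ∧ a * θ' < 1 :=
  ((frequently_gt_nhds θ).and_eventually
    (((continuous_const_mul a).tendsto θ).eventually (gt_mem_nhds h))).exists

theorem Real.rpow_neg_le_mul_rpow_neg_of_le_mul {S N m ε : ℝ} (hS : 0 < S) (hN : 0 < N)
    (hε : 0 ≤ ε) (h : S ≤ N * m) :
    m ^ (-ε) ≤ N ^ ε * S ^ (-ε) :=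
  calc m ^ (-ε) ≤ (S / N) ^ (-ε) :=
        Real.rpow_le_rpow_of_nonpos (by positivity) (by rwa [div_le_iff₀' hN]) (by linarith)
    _ = N ^ ε * S ^ (-ε) := by
        rw [Real.div_rpow hS.le hN.le, Real.rpow_neg hN.le, div_inv_eq_mul, mul_comm]

theorem ENNReal.ofReal_rpow_le_ofReal_rpow {x : ℝ} (hx : 0 ≤ x) (p : ℝ) :
    ENNReal.ofReal (x ^ p) ≤ ENNReal.ofReal x ^ p := by
  rcases hx.eq_or_lt with rfl | hx
  · rcases lt_trichotomy p 0 with hp | rfl | hp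
    · simp [ENNReal.zero_rpow_of_neg hp]
    · simp
    · simp [Real.zero_rpow hp.ne']
  · exact (ENNReal.ofReal_rpow_of_pos hx).ge

theorem Real.exists_pairwise_le_abs_sub_of_ofReal_lt_volume {E : Set ℝ} (hE : IsClosed E)
    (hbdd : BddAbove E) {δ : ℝ} (hδ : 0 < δ) (k : ℕ)
    (hvol : ENNReal.ofReal (k * δ) < volume E) :
    ∃ v : Fin (k + 1) → ℝ, (∀ i, v i ∈ E) ∧ Pairwise fun i j => δ ≤ |v i - v j| := by
  induction k generalizing E with
  | zero =>
    obtain ⟨e, he⟩ := nonempty_of_measure_ne_zero hvol.ne_bot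
    exact ⟨fun _ => e, fun _ => he, fun i j hij => (hij (Subsingleton.elim (α := Fin 1) i j)).elim⟩
  | succ k ih =>
    have hne : E.Nonempty := nonempty_of_measure_ne_zero (pos_of_gt hvol).ne'
    set M := sSup E
    have hM : M ∈ E := hE.csSup_mem hne hbdd
    -- the last point is `sup E`; the others are found in `E ∩ (-∞, sup E - δ]`,
    -- which has lost at most `δ` of measure
    have hcover : E ⊆ (E ∩ Iic (M - δ)) ∪ Ioc (M - δ) M := fun e he =>
      (le_or_gt e (M - δ)).imp (fun h => ⟨he, h⟩) fun h => ⟨h, le_csSup hbdd he⟩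
    have hvol' : ENNReal.ofReal (k * δ) < volume (E ∩ Iic (M - δ)) := by
      have h := hvol.trans_le ((measure_mono hcover).trans (measure_union_le _ _))
      rw [Real.volume_Ioc, sub_sub_cancel, Nat.cast_succ, add_one_mul,
        ENNReal.ofReal_add (by positivity) hδ.le] at h
      exact (ENNReal.add_lt_add_iff_right ENNReal.ofReal_ne_top).1 h
    obtain ⟨v, hvE, hsep⟩ := ih (hE.inter isClosed_Iic) (hbdd.mono inter_subset_left) hvol'
    have hlast : ∀ i, δ ≤ |M - v i| := fun i => by
      rw [abs_of_nonneg] <;> linarith [mem_Iic.1 (hvE i).2]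
    refine ⟨Fin.snoc v M, fun i => ?_, fun i j hij => ?_⟩
    · induction i using Fin.lastCases <;> simp [hM, (hvE _).1]
    · induction i using Fin.lastCases <;> induction j using Fin.lastCases
      · exact absurd rfl hij
      · simpa using hlast _
      · simpa [abs_sub_comm] using hlast _
      · simpa using hsep (Fin.castSucc_injective _ |>.ne_iff.1 hij)

namespace Polynomial

theorem abs_coeff_prod_X_sub_C_le {ι : Type*} (t : Finset ι) {x : ι → ℝ}
    (hx : ∀ j ∈ t, |x j| ≤ 1) (k : ℕ) :
    |(∏ j ∈ t, (X - C (x j))).coeff k| ≤ 2 ^ t.card := by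
  classical
  induction t using Finset.induction_on generalizing k with
  | empty => rw [Finset.prod_empty, coeff_one]; split_ifs <;> norm_num
  | insert j t hj ih =>
    have ih' k := ih (fun i hi => hx i (Finset.mem_insert_of_mem hi)) k
    have hX : |(X * ∏ i ∈ t, (X - C (x i))).coeff k| ≤ 2 ^ t.card := by
      cases k with
      | zero => simp
      | succ k => rw [coeff_X_mul]; exact ih' k
    rw [Finset.prod_insert hj, Finset.card_insert_of_notMem hj, sub_mul, coeff_sub, coeff_C_mul]
    calc _ ≤ |(X * ∏ i ∈ t, (X - C (x i))).coeff k|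
          + |x j| * |(∏ i ∈ t, (X - C (x i))).coeff k| := by rw [← abs_mul]; exact abs_sub _ _
      _ ≤ 2 ^ t.card + 1 * 2 ^ t.card := by
          gcongr
          · exact hx j (Finset.mem_insert_self j t)
          · exact ih' k
      _ = 2 ^ (t.card + 1) := by ring

end Polynomial

open Polynomial in
theorem Lagrange.abs_coeff_basis_le {ι : Type*} [DecidableEq ι] {s : Finset ι} {v : ι → ℝ}
    {i : ι} {δ : ℝ} (hδ : 0 < δ) (hv : ∀ j ∈ s, |v j| ≤ 1)
    (hsep : ∀ j ∈ s, j ≠ i → δ ≤ |v i - v j|) (k : ℕ) :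
    |(Lagrange.basis s v i).coeff k| ≤ (2 / δ) ^ (s.erase i).card := by
  have hbasis : Lagrange.basis s v i
      = C (∏ j ∈ s.erase i, (v i - v j)⁻¹) * ∏ j ∈ s.erase i, (X - C (v j)) := by
    rw [Lagrange.basis, map_prod, ← Finset.prod_mul_distrib]
    rfl
  have hinv : |∏ j ∈ s.erase i, (v i - v j)⁻¹| ≤ δ⁻¹ ^ (s.erase i).card := by
    rw [Finset.abs_prod, ← Finset.prod_const]
    refine Finset.prod_le_prod (fun _ _ => abs_nonneg _) fun j hj => ?_
    obtain ⟨hji, hj⟩ := Finset.mem_erase.1 hj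
    rw [abs_inv]
    exact inv_anti₀ hδ (hsep j hj hji)
  rw [hbasis, coeff_C_mul, abs_mul, div_eq_inv_mul, mul_pow]
  gcongr
  exact abs_coeff_prod_X_sub_C_le _ (fun j hj => hv j (Finset.mem_of_mem_erase hj)) k

namespace Polynomial

theorem abs_coeff_le_of_abs_eval_le {d : ℕ} {p : ℝ[X]} (hp : p.natDegree ≤ d)
    {v : Fin (d + 1) → ℝ} {δ η : ℝ} (hδ : 0 < δ) (hv : ∀ i, |v i| ≤ 1)
    (hsep : Pairwise fun i j => δ ≤ |v i - v j|) (hval : ∀ i, |p.eval (v i)| ≤ η) (k : ℕ) :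
    |p.coeff k| ≤ (d + 1) * η * (2 / δ) ^ d := by
  have hinj : Set.InjOn v (Finset.univ : Finset (Fin (d + 1))) := fun i _ j _ hij =>
    by_contra fun hne => (hsep hne).not_gt (by rwa [hij, sub_self, abs_zero])
  have hdeg : p.degree < (Finset.univ : Finset (Fin (d + 1))).card := by
    rw [Finset.card_univ, Fintype.card_fin]
    exact degree_le_natDegree.trans_lt (by exact_mod_cast Nat.lt_succ_of_le hp)
  have hterm : ∀ i ∈ Finset.univ,
      |(C (p.eval (v i)) * Lagrange.basis Finset.univ v i).coeff k| ≤ η * (2 / δ) ^ d := by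
    intro i _
    rw [coeff_C_mul, abs_mul]
    refine mul_le_mul (hval i) ?_ (abs_nonneg _) ((abs_nonneg _).trans (hval i))
    have := Lagrange.abs_coeff_basis_le (s := Finset.univ) (i := i) hδ (fun j _ => hv j)
      (fun j _ hji => hsep hji.symm) k
    rwa [Finset.card_erase_of_mem (Finset.mem_univ i), Finset.card_univ, Fintype.card_fin,
      Nat.add_sub_cancel] at this
  rw [Lagrange.eq_interpolate hinj hdeg, Lagrange.interpolate_apply, finsetSum_coeff]
  refine (Finset.abs_sum_le_sum_abs _ _).trans ((Finset.sum_le_sum hterm).trans_eq ?_)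
  simp only [Finset.sum_const, Finset.card_univ, Fintype.card_fin, nsmul_eq_mul]
  push_cast
  ring

theorem abs_coeff_mul_pow_le_of_ofReal_lt_volume {d : ℕ} {p : ℝ[X]} (hp : p.natDegree ≤ d)
    {η x : ℝ} (hx : 0 < x)
    (hvol : ENNReal.ofReal (d * (2 * x)) < volume {t ∈ closedBall (0 : ℝ) 1 | |p.eval t| ≤ η})
    (k : ℕ) :
    |p.coeff k| * x ^ d ≤ (d + 1) * η := by
  obtain ⟨v, hvE, hsep⟩ := Real.exists_pairwise_le_abs_sub_of_ofReal_lt_volume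
    (isClosed_closedBall.inter (isClosed_le p.continuous.abs continuous_const))
    (isBounded_closedBall.subset (sep_subset _ _)).bddAbove (by positivity) d hvol
  have h := abs_coeff_le_of_abs_eval_le hp (by positivity)
    (fun i => by simpa using (hvE i).1) hsep (fun i => (hvE i).2) k
  calc |p.coeff k| * x ^ d ≤ (d + 1) * η * (2 / (2 * x)) ^ d * x ^ d := by gcongr
    _ = (d + 1) * η * (2 / (2 * x) * x) ^ d := by ring
    _ = (d + 1) * η := by rw [show 2 / (2 * x) * x = 1 by field_simp, one_pow, mul_one]

-- The `ℝ≥0∞` power is `⊤` when `p.coeff k = 0`, where the real power would be the junk value `0`.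
theorem volume_sublevel_closedBall_le {d : ℕ} {p : ℝ[X]} (hp : p.natDegree ≤ d)
    {θ η : ℝ} (hθ : 0 ≤ θ) (hdθ : d * θ ≤ 1) (hη : 0 < η) (k : ℕ) :
    volume {t ∈ closedBall (0 : ℝ) 1 | |p.eval t| ≤ η} ≤
      ENNReal.ofReal (2 * (d + 2) * ((d + 1) * η) ^ θ) * ENNReal.ofReal |p.coeff k| ^ (-θ) := by
  set a := |p.coeff k|
  have hball : volume {t ∈ closedBall (0 : ℝ) 1 | |p.eval t| ≤ η} ≤ ENNReal.ofReal 2 :=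
    (measure_mono (sep_subset _ _)).trans_eq (by rw [Real.volume_closedBall]; norm_num)
  obtain ⟨m, hm0, hmE⟩ : ∃ m : ℝ, 0 ≤ m ∧
      volume {t ∈ closedBall (0 : ℝ) 1 | |p.eval t| ≤ η} = ENNReal.ofReal m :=
    ⟨_, ENNReal.toReal_nonneg,
      (ENNReal.ofReal_toReal (ne_top_of_le_ne_top ENNReal.ofReal_ne_top hball)).symm⟩
  have key : a ^ θ * m ≤ 2 * (d + 2) * ((d + 1) * η) ^ θ := by
    rcases hm0.eq_or_lt with rfl | hm
    · rw [mul_zero]; positivity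
    obtain ⟨x, rfl⟩ : ∃ x, m = 2 * (d + 2) * x := ⟨m / (2 * (d + 2)), by field_simp⟩
    have hx0 : 0 < x := pos_of_mul_pos_right hm (by positivity)
    have hx1 : x ≤ 1 := by
      have := (ENNReal.ofReal_le_ofReal_iff zero_le_two).1 (hmE ▸ hball)
      nlinarith
    have hcoeff : a * x ^ d ≤ (d + 1) * η :=
      abs_coeff_mul_pow_le_of_ofReal_lt_volume hp hx0
        (by rw [hmE, ENNReal.ofReal_lt_ofReal_iff hm]; nlinarith) k
    calc a ^ θ * (2 * (d + 2) * x) = 2 * (d + 2) * (a ^ θ * x) := by ring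
      _ ≤ 2 * (d + 2) * (a ^ θ * x ^ ((d : ℝ) * θ)) := by
          gcongr
          simpa using Real.rpow_le_rpow_of_exponent_ge hx0 hx1 hdθ
      _ = 2 * (d + 2) * (a * x ^ d) ^ θ := by
          rw [Real.mul_rpow (abs_nonneg _) (by positivity), Real.rpow_natCast_mul hx0.le]
      _ ≤ 2 * (d + 2) * ((d + 1) * η) ^ θ := by gcongr
  rw [hmE, ENNReal.rpow_neg, ← div_eq_mul_inv, ENNReal.le_div_iff_mul_le
    (Or.inr (by positivity)) (Or.inl (ENNReal.rpow_ne_top_of_nonneg hθ ENNReal.ofReal_ne_top)),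
    ENNReal.ofReal_rpow_of_nonneg (abs_nonneg _) hθ, ← ENNReal.ofReal_mul (by positivity)]
  exact ENNReal.ofReal_le_ofReal (by linarith)

end Polynomial

theorem ofReal_abs_rpow_neg_le_tsum_indicator {α : Type*} (g : α → ℝ) {ε : ℝ} (hε : 0 ≤ ε)
    (x : α) :
    ENNReal.ofReal |g x| ^ (-ε) ≤
      1 + ∑' k : ℕ, ENNReal.ofReal (2 ^ ε) ^ (k + 1) * {y | |g y| ≤ 2⁻¹ ^ k}.indicator 1 x := by
  have hq : 1 ≤ ENNReal.ofReal (2 ^ ε) := ENNReal.one_le_ofReal.2 (Real.one_le_rpow one_le_two hε)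
  rcases (abs_nonneg (g x)).eq_or_lt with h0 | hpos
  · have hall : ∀ k : ℕ, x ∈ {y | |g y| ≤ 2⁻¹ ^ k} := fun k => by
      simp only [mem_ofPred_eq, ← h0]; positivity
    refine le_add_left ((le_top.trans_eq
      (ENNReal.tsum_const_eq_top_of_ne_zero one_ne_zero).symm).trans
        (ENNReal.tsum_le_tsum fun k => ?_))
    rw [indicator_of_mem (hall k), Pi.one_apply, mul_one]
    exact one_le_pow₀ hq
  rcases le_or_gt 1 |g x| with h1 | h1
  · exact le_add_right ((ENNReal.rpow_le_rpow_of_exponent_le (ENNReal.one_le_ofReal.2 h1)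
      (neg_nonpos.2 hε)).trans_eq ENNReal.rpow_zero)
  obtain ⟨k, hk, hk'⟩ := exists_nat_pow_near_of_lt_one hpos h1.le (by norm_num : (0:ℝ) < 2⁻¹)
    (by norm_num)
  refine le_add_left (le_trans ?_ (ENNReal.le_tsum k))
  rw [indicator_of_mem (show x ∈ {y | |g y| ≤ 2⁻¹ ^ k} from hk'), Pi.one_apply, mul_one,
    ENNReal.ofReal_rpow_of_pos hpos, ← ENNReal.ofReal_pow (by positivity)]
  refine ENNReal.ofReal_le_ofReal ((Real.rpow_le_rpow_of_nonpos (by positivity) hk.le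
    (by linarith)).trans_eq ?_)
  rw [inv_pow, Real.inv_rpow (by positivity), Real.rpow_neg (by positivity), inv_inv,
    ← Real.rpow_natCast, ← Real.rpow_natCast, ← Real.rpow_mul zero_le_two,
    ← Real.rpow_mul zero_le_two, mul_comm]

theorem MeasureTheory.setLIntegral_ofReal_abs_rpow_neg_le {α : Type*} [MeasurableSpace α]
    {μ : Measure α} {s : Set α} {g : α → ℝ} (hg : Measurable g) {C θ ε : ℝ} (hC : 0 ≤ C)
    (hε : 0 ≤ ε) (hεθ : ε < θ)
    (h : ∀ t > 0, μ {x ∈ s | |g x| ≤ t} ≤ ENNReal.ofReal (C * t ^ θ)) :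
    ∫⁻ x in s, ENNReal.ofReal |g x| ^ (-ε) ∂μ ≤
      μ s + ENNReal.ofReal (2 ^ ε * C / (1 - 2 ^ (ε - θ))) := by
  set ρ : ℝ := 2 ^ (ε - θ) with hρ
  have hρ1 : ρ < 1 := Real.rpow_lt_one_of_one_lt_of_neg one_lt_two (by linarith)
  have hmeas k : MeasurableSet {y | |g y| ≤ (2⁻¹ : ℝ) ^ k} :=
    measurableSet_le hg.abs measurable_const
  have hterm k : ENNReal.ofReal (2 ^ ε) ^ (k + 1) * μ {x ∈ s | |g x| ≤ 2⁻¹ ^ k} ≤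
      ENNReal.ofReal (2 ^ ε * C * ρ ^ k) := by
    refine (mul_le_mul_right (h _ (by positivity)) _).trans_eq ?_
    rw [← ENNReal.ofReal_pow (by positivity), ← ENNReal.ofReal_mul (by positivity)]
    congr 1
    rw [hρ, Real.rpow_sub two_pos, div_pow, inv_pow, Real.inv_rpow (by positivity),
      ← Real.rpow_pow_comm zero_le_two]
    field_simp
    ring
  calc ∫⁻ x in s, ENNReal.ofReal |g x| ^ (-ε) ∂μ
      ≤ ∫⁻ x in s, 1 + ∑' k : ℕ, ENNReal.ofReal (2 ^ ε) ^ (k + 1) *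
          {y | |g y| ≤ 2⁻¹ ^ k}.indicator 1 x ∂μ :=
        lintegral_mono fun x => ofReal_abs_rpow_neg_le_tsum_indicator g hε x
    _ = μ s + ∑' k : ℕ, ENNReal.ofReal (2 ^ ε) ^ (k + 1) * μ {x ∈ s | |g x| ≤ 2⁻¹ ^ k} := by
        rw [lintegral_add_left measurable_const, setLIntegral_one,
          lintegral_tsum fun k => ((measurable_one.indicator (hmeas k)).const_mul _).aemeasurable]
        congr 1
        refine tsum_congr fun k => ?_
        rw [lintegral_const_mul _ (measurable_one.indicator (hmeas k)),
          lintegral_indicator_one (hmeas k), Measure.restrict_apply (hmeas k), inter_comm]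
        rfl
    _ ≤ μ s + ∑' k : ℕ, ENNReal.ofReal (2 ^ ε * C * ρ ^ k) := by
        gcongr with k
        exact hterm k
    _ = μ s + ENNReal.ofReal (2 ^ ε * C / (1 - ρ)) := by
        rw [← ENNReal.ofReal_tsum_of_nonneg (fun k => by positivity)
          ((summable_geometric_of_lt_one (by positivity) hρ1).mul_left _),
          tsum_mul_left, tsum_geometric_of_lt_one (by positivity) hρ1, div_eq_mul_inv]

theorem MeasureTheory.volume_eq_lintegral_volume_cons {α : Type*} [MeasureSpace α]
    [SigmaFinite (volume : Measure α)] {n : ℕ} {S : Set (Fin (n + 1) → α)}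
    (hS : MeasurableSet S) :
    volume S = ∫⁻ y, volume {t | (Fin.cons t y : Fin (n + 1) → α) ∈ S} := by
  have hmp := (volume_preserving_piFinSuccAbove (fun _ : Fin (n + 1) => α) 0).symm
  rw [← hmp.measure_preimage hS.nullMeasurableSet, Measure.volume_eq_prod,
    Measure.prod_apply_symm (hmp.measurable hS)]
  simp only [MeasurableEquiv.piFinSuccAbove_symm_apply, Fin.insertNthEquiv, Fin.zero_succAbove,
    Fin.insertNth_zero', Fin.removeNth_zero, Equiv.coe_fn_mk]
  rfl

theorem Fin.cons_mem_closedBall_zero {E : Type*} [SeminormedAddCommGroup E] {n : ℕ} {r : ℝ}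
    (hr : 0 ≤ r) (t : E) (y : Fin n → E) :
    (Fin.cons t y : Fin (n + 1) → E) ∈ closedBall 0 r ↔
      t ∈ closedBall 0 r ∧ y ∈ closedBall 0 r := by
  simp only [mem_closedBall_zero_iff, pi_norm_le_iff_of_nonneg hr, Fin.forall_fin_succ,
    Fin.cons_zero, Fin.cons_succ]

namespace MvPolynomial

theorem card_support_le_of_totalDegree_le {σ R : Type*} [Fintype σ] [CommSemiring R]
    {P : MvPolynomial σ R} {d : ℕ} (hP : P.totalDegree ≤ d) :
    P.support.card ≤ (d + 1) ^ Fintype.card σ := by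
  classical
  calc P.support.card ≤ (Fintype.piFinset fun _ : σ => Finset.range (d + 1)).card := by
        refine Finset.card_le_card_of_injOn (⇑) (fun β hβ => ?_) DFunLike.coe_injective.injOn
        simp only [Finset.mem_coe, Fintype.mem_piFinset, Finset.mem_range, Nat.lt_succ_iff]
        exact fun i => (monomial_le_degreeOf i hβ).trans ((degreeOf_le_totalDegree P i).trans hP)
    _ = (d + 1) ^ Fintype.card σ := by simp

theorem sum_abs_coeff_le {σ : Type*} [Fintype σ] {P : MvPolynomial σ ℝ} {d : ℕ}
    (hP : P.totalDegree ≤ d) {M : ℝ} (hM0 : 0 ≤ M) (hM : ∀ β ∈ P.support, |P.coeff β| ≤ M) :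
    ∑ β ∈ P.support, |P.coeff β| ≤ (d + 1) ^ Fintype.card σ * M := by
  refine (Finset.sum_le_card_nsmul _ _ _ hM).trans ?_
  rw [nsmul_eq_mul]
  gcongr
  exact_mod_cast card_support_le_of_totalDegree_le hP

theorem volume_sublevel_slice_le {n d : ℕ} {P : MvPolynomial (Fin (n + 1)) ℝ}
    (hP : P.totalDegree ≤ d) {θ η : ℝ} (hθ : 0 ≤ θ) (hdθ : d * θ ≤ 1) (hη : 0 < η) (k : ℕ)
    (y : Fin n → ℝ) :
    volume {t | (Fin.cons t y : Fin (n + 1) → ℝ) ∈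
        {x ∈ closedBall (0 : Fin (n + 1) → ℝ) 1 | |eval x P| ≤ η}} ≤
      (closedBall 0 1).indicator (fun y => ENNReal.ofReal (2 * (d + 2) * ((d + 1) * η) ^ θ) *
        ENNReal.ofReal |eval y ((finSuccEquiv ℝ n P).coeff k)| ^ (-θ)) y := by
  by_cases hy : y ∈ closedBall 0 1
  · have hslice : {t | (Fin.cons t y : Fin (n + 1) → ℝ) ∈
          {x ∈ closedBall (0 : Fin (n + 1) → ℝ) 1 | |eval x P| ≤ η}} =
        {t ∈ closedBall (0 : ℝ) 1 | |((finSuccEquiv ℝ n P).map (eval y)).eval t| ≤ η} := by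
      ext t
      simp only [mem_ofPred_eq, Fin.cons_mem_closedBall_zero zero_le_one, hy, and_true,
        eval_eq_eval_mv_eval']
    have hdeg : ((finSuccEquiv ℝ n P).map (eval y)).natDegree ≤ d :=
      Polynomial.natDegree_map_le.trans
        ((natDegree_finSuccEquiv P).trans_le ((degreeOf_le_totalDegree P 0).trans hP))
    rw [indicator_of_mem hy, hslice, ← Polynomial.coeff_map]
    exact Polynomial.volume_sublevel_closedBall_le hdeg hθ hdθ hη k
  · have hempty : {t | (Fin.cons t y : Fin (n + 1) → ℝ) ∈
        {x ∈ closedBall (0 : Fin (n + 1) → ℝ) 1 | |eval x P| ≤ η}} = ∅ :=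
      eq_empty_of_forall_notMem fun t ht =>
        hy ((Fin.cons_mem_closedBall_zero zero_le_one t y).1 ht.1).2
    rw [indicator_of_notMem hy, hempty, measure_empty]

def HasSublevelBound (n d : ℕ) (θ C : ℝ) : Prop :=
  ∀ P : MvPolynomial (Fin n) ℝ, P.totalDegree ≤ d → ∀ β, 1 ≤ |P.coeff β| → ∀ η > 0,
    volume {x ∈ closedBall (0 : Fin n → ℝ) 1 | |eval x P| ≤ η} ≤ ENNReal.ofReal (C * η ^ θ)

theorem hasSublevelBound_zero (d : ℕ) {θ : ℝ} (hθ : 0 ≤ θ) : HasSublevelBound 0 d θ 1 := by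
  intro P _ β hβ η _
  have hP x : eval x P = P.coeff β := by
    rw [Subsingleton.elim β 0, P.eq_C_of_isEmpty, eval_C, coeff_zero_C]
  rcases lt_or_ge η 1 with hη1 | hη1
  · have hempty : {x ∈ closedBall (0 : Fin 0 → ℝ) 1 | |eval x P| ≤ η} = ∅ :=
      eq_empty_of_forall_notMem fun x hx => by
        have := hx.2
        rw [hP] at this
        linarith
    rw [hempty, measure_empty]
    exact zero_le
  calc volume {x ∈ closedBall (0 : Fin 0 → ℝ) 1 | |eval x P| ≤ η}
      ≤ volume (closedBall (0 : Fin 0 → ℝ) 1) := measure_mono (sep_subset _ _)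
    _ = 1 := by simp [Real.volume_pi_closedBall]
    _ ≤ ENNReal.ofReal (1 * η ^ θ) := by
        rw [one_mul]
        exact ENNReal.one_le_ofReal.2 (Real.one_le_rpow hη1 hθ)

theorem hasSublevelBound_succ {n d : ℕ} {θ θ' C : ℝ} (hθ : 0 ≤ θ) (hθθ' : θ < θ')
    (hdθ : d * θ ≤ 1) (hC : 0 ≤ C) (h : HasSublevelBound n d θ' C) :
    HasSublevelBound (n + 1) d θ
      (2 * (d + 2) * (d + 1) ^ θ * (2 ^ n + 2 ^ θ * C / (1 - 2 ^ (θ - θ')))) := by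
  intro P hPd β hβ η hη
  set c := (finSuccEquiv ℝ n P).coeff (β 0)
  have hcβ : c.coeff (Finsupp.tail β) = P.coeff β := by
    rw [finSuccEquiv_coeff_coeff, Finsupp.cons_tail]
  have hc0 : c ≠ 0 := fun h0 => by
    rw [← hcβ, h0, coeff_zero, abs_zero] at hβ
    exact zero_lt_one.not_ge hβ
  have hcd : c.totalDegree ≤ d :=
    le_self_add.trans ((totalDegree_coeff_finSuccEquiv_add_le P _ hc0).trans hPd)
  have hS : MeasurableSet {x ∈ closedBall (0 : Fin (n + 1) → ℝ) 1 | |eval x P| ≤ η} :=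
    (isClosed_closedBall.inter (isClosed_le (continuous_eval P).abs continuous_const)).measurableSet
  have hρ : (2 : ℝ) ^ (θ - θ') < 1 := Real.rpow_lt_one_of_one_lt_of_neg one_lt_two (by linarith)
  rw [volume_eq_lintegral_volume_cons hS]
  refine (lintegral_mono (volume_sublevel_slice_le hPd hθ hdθ hη (β 0))).trans ?_
  rw [lintegral_indicator measurableSet_closedBall, lintegral_const_mul' _ _ ENNReal.ofReal_ne_top]
  refine (mul_le_mul_right (setLIntegral_ofReal_abs_rpow_neg_le (continuous_eval c).measurable
    hC hθ hθθ' fun t ht => h c hcd _ (hcβ ▸ hβ) t ht) _).trans_eq ?_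
  rw [Real.volume_pi_closedBall _ zero_le_one, ← ENNReal.ofReal_add (by positivity)
    (div_nonneg (by positivity) (by linarith)), ← ENNReal.ofReal_mul (by positivity),
    Real.mul_rpow (by positivity) hη.le]
  simp only [Fintype.card_fin, mul_one]
  congr 1
  ring

theorem exists_hasSublevelBound (n d : ℕ) {θ : ℝ} (hθ : 0 ≤ θ) (hdθ : d * θ < 1) :
    ∃ C, 0 ≤ C ∧ HasSublevelBound n d θ C := by
  induction n generalizing θ with
  | zero => exact ⟨1, zero_le_one, hasSublevelBound_zero d hθ⟩
  | succ n ih =>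
    -- the dyadic bound on `∫ |c|^(-θ)` needs the sublevel estimate for `c` at an exponent `> θ`
    obtain ⟨θ', hθθ', hdθ'⟩ := exists_gt_mul_lt_one hdθ
    obtain ⟨C, hC, hb⟩ := ih (hθ.trans hθθ'.le) hdθ'
    have hρ : (2 : ℝ) ^ (θ - θ') < 1 := Real.rpow_lt_one_of_one_lt_of_neg one_lt_two (by linarith)
    exact ⟨_, mul_nonneg (by positivity) (add_nonneg (by positivity)
      (div_nonneg (by positivity) (by linarith))), hasSublevelBound_succ hθ hθθ' hdθ.le hC hb⟩

theorem HasSublevelBound.setLIntegral_ofReal_abs_eval_rpow_neg_le {n d : ℕ} {θ C ε : ℝ}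
    (h : HasSublevelBound n d θ C) (hC : 0 ≤ C) (hε : 0 ≤ ε) (hεθ : ε < θ)
    {P : MvPolynomial (Fin n) ℝ} (hP : P.totalDegree ≤ d) {β : Fin n →₀ ℕ} (hβ : P.coeff β ≠ 0) :
    ∫⁻ x in closedBall (0 : Fin n → ℝ) 1, ENNReal.ofReal (|eval x P| ^ (-ε)) ≤
      ENNReal.ofReal ((2 ^ n + 2 ^ ε * C / (1 - 2 ^ (ε - θ))) * |P.coeff β| ^ (-ε)) := by
  set m := |P.coeff β|
  have hm : 0 < m := abs_pos.2 hβ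
  have hρ : (2 : ℝ) ^ (ε - θ) < 1 := Real.rpow_lt_one_of_one_lt_of_neg one_lt_two (by linarith)
  have hnorm : |(m⁻¹ • P).coeff β| = 1 := by
    rw [coeff_smul, smul_eq_mul, abs_mul, abs_inv, abs_of_pos hm, inv_mul_cancel₀ hm.ne']
  have hint := setLIntegral_ofReal_abs_rpow_neg_le (continuous_eval (m⁻¹ • P)).measurable hC hε
    hεθ (h _ ((totalDegree_smul_le _ _).trans hP) β hnorm.ge)
  rw [Real.volume_pi_closedBall _ zero_le_one, Fintype.card_fin, mul_one,
    ← ENNReal.ofReal_add (by positivity) (div_nonneg (by positivity) (by linarith))] at hint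
  calc ∫⁻ x in closedBall (0 : Fin n → ℝ) 1, ENNReal.ofReal (|eval x P| ^ (-ε))
      ≤ ∫⁻ x in closedBall (0 : Fin n → ℝ) 1,
          ENNReal.ofReal (m ^ (-ε)) * ENNReal.ofReal |eval x (m⁻¹ • P)| ^ (-ε) := by
        refine lintegral_mono fun x => ?_
        have hx : |eval x P| = m * |eval x (m⁻¹ • P)| := by
          rw [smul_eval, abs_mul, abs_inv, abs_of_pos hm, mul_inv_cancel_left₀ hm.ne']
        rw [hx, Real.mul_rpow hm.le (abs_nonneg _), ENNReal.ofReal_mul (by positivity)]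
        gcongr
        exact ENNReal.ofReal_rpow_le_ofReal_rpow (abs_nonneg _) _
    _ = ENNReal.ofReal (m ^ (-ε)) *
          ∫⁻ x in closedBall (0 : Fin n → ℝ) 1, ENNReal.ofReal |eval x (m⁻¹ • P)| ^ (-ε) :=
        lintegral_const_mul' _ _ ENNReal.ofReal_ne_top
    _ ≤ ENNReal.ofReal (m ^ (-ε)) * ENNReal.ofReal (2 ^ n + 2 ^ ε * C / (1 - 2 ^ (ε - θ))) := by
        gcongr
    _ = _ := by rw [← ENNReal.ofReal_mul (by positivity), mul_comm]

end MvPolynomial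

theorem polynomial_sublevel_estimate_general (n d : ℕ) (ε : ℝ)
    (hε0 : 0 < ε) (hε : ε < 1 / d) :
    ∃ A : ℝ, 0 < A ∧ ∀ P : MvPolynomial (Fin n) ℝ, P ≠ 0 → P.totalDegree ≤ d →
      (∫⁻ x in Metric.closedBall (0 : Fin n → ℝ) 1,
          ENNReal.ofReal (|MvPolynomial.eval x P| ^ (-ε))) ≤
        ENNReal.ofReal (A * (∑ β ∈ P.support, |P.coeff β|) ^ (-ε)) := by
  have hdε : d * ε < 1 := by
    rcases (Nat.cast_nonneg d : (0 : ℝ) ≤ d).eq_or_lt with h | h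
    · rw [← h, zero_mul]; exact one_pos
    · rwa [lt_div_iff₀' h] at hε
  obtain ⟨θ, hεθ, hdθ⟩ := exists_gt_mul_lt_one hdε
  obtain ⟨C, hC, hsub⟩ := MvPolynomial.exists_hasSublevelBound n d (hε0.le.trans hεθ.le) hdθ
  set B := 2 ^ n + 2 ^ ε * C / (1 - 2 ^ (ε - θ))
  have hB : 0 < B := add_pos_of_pos_of_nonneg (by positivity) (div_nonneg (by positivity)
    (sub_nonneg.2 (Real.rpow_lt_one_of_one_lt_of_neg one_lt_two (sub_neg.2 hεθ)).le))
  refine ⟨B * ((d + 1) ^ n) ^ ε, by positivity, fun P hP hPd => ?_⟩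
  obtain ⟨β, hβ, hmax⟩ := P.support.exists_max_image (|P.coeff ·|)
    (MvPolynomial.support_nonempty.2 hP)
  have hm : 0 < |P.coeff β| := abs_pos.2 (MvPolynomial.mem_support_iff.1 hβ)
  have hS : 0 < ∑ γ ∈ P.support, |P.coeff γ| :=
    hm.trans_le (Finset.single_le_sum (fun γ _ => abs_nonneg (P.coeff γ)) hβ)
  refine (hsub.setLIntegral_ofReal_abs_eval_rpow_neg_le hC hε0.le hεθ hPd
    (MvPolynomial.mem_support_iff.1 hβ)).trans (ENNReal.ofReal_le_ofReal ?_)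
  rw [mul_assoc]
  gcongr
  exact Real.rpow_neg_le_mul_rpow_neg_of_le_mul hS (by positivity) hε0.le
    (by simpa using MvPolynomial.sum_abs_coeff_le hPd hm.le hmax)

/-- Sublevel estimate for polynomials (Ricci–Stein): for `0 < ε < 1/d` there is a constant
`A` depending only on `ε`, `d`, `n` such that for every nonzero polynomial `P` of total
degree at most `d`,
`∫_{|x| ≤ 1} |P(x)|^{-ε} dx ≤ A (∑_β |a_β|)^{-ε}`. -/
theorem polynomial_sublevel_estimate (n d : ℕ) (hn : 0 < n) (hd : 0 < d) (ε : ℝ)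
    (hε0 : 0 < ε) (hε : ε < 1 / d) :
    ∃ A : ℝ, 0 < A ∧ ∀ P : MvPolynomial (Fin n) ℝ, P ≠ 0 → P.totalDegree ≤ d →
      (∫⁻ x in Metric.closedBall (0 : Fin n → ℝ) 1,
          ENNReal.ofReal (|MvPolynomial.eval x P| ^ (-ε))) ≤
        ENNReal.ofReal (A * (∑ β ∈ P.support, |P.coeff β|) ^ (-ε)) :=
  polynomial_sublevel_estimate_general n d ε hε0 hε
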